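/- arXiv:2110.02790 — 6 statements merged into one kernel-verified Lean document; each statement's English description precedes it below -/
import Mathlib

section
/- For k ≥ 2, det B_k = p · Σ_{j=0}^{k-1} c_I^j (c_I + λ)^{k-1-j}, where B_k is the matrix with c_I on the diagonal (first k-1 rows), -c_I-λ on the superdiagonal, last row all p, and zeros elsewhere. -/
/-- The `k × k` matrix `B_k`: diagonal entries `c_I` in the first `k-1` rows,
superdiagonal entries `-c_I - λ`, last row all `p`, other entries `0`. -/
def Bmat (cI p lam : ℝ) (k : ℕ) : Matrix (Fin k) (Fin k) ℝ :=
  Matrix.of fun i j =>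
    if i.val = k - 1 then p
    else if j.val = i.val then cI
    else if j.val = i.val + 1 then -cI - lam
    else 0

/-! Expanding along the first column, the minor at the top-left corner is `B_{k-1}` and the minor
at the last row is lower triangular with diagonal `-c_I - λ`, so
`det B_k = c_I det B_{k-1} + p (c_I + λ)^(k-1)`; the closed form follows by induction on `k`. -/

lemma Bmat_submatrix_succ_succ (cI p lam : ℝ) (n : ℕ) :
    (Bmat cI p lam (n + 2)).submatrix Fin.succ Fin.succ = Bmat cI p lam (n + 1) := by
  ext i j
  simp only [Matrix.submatrix_apply, Bmat, Matrix.of_apply, Fin.val_succ]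
  split_ifs <;> first | rfl | omega

lemma Bmat_castSucc_succ (cI p lam : ℝ) (n : ℕ) (i j : Fin (n + 1)) :
    Bmat cI p lam (n + 2) i.castSucc j.succ =
      if j = i then -cI - lam else if j.val + 1 = i.val then cI else 0 := by
  simp only [Bmat, Matrix.of_apply, Fin.val_succ, Fin.val_castSucc, Fin.ext_iff]
  split_ifs <;> first | rfl | omega

lemma det_Bmat_submatrix_castSucc_succ (cI p lam : ℝ) (n : ℕ) :
    ((Bmat cI p lam (n + 2)).submatrix Fin.castSucc Fin.succ).det = (-cI - lam) ^ (n + 1) := by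
  have hlower : ((Bmat cI p lam (n + 2)).submatrix Fin.castSucc Fin.succ).IsLowerTriangular :=
    fun i j (hij : i < j) => by
      rw [Matrix.submatrix_apply, Bmat_castSucc_succ, if_neg (by omega), if_neg (by omega)]
  rw [Matrix.det_of_isLowerTriangular _ hlower]
  simp [Bmat_castSucc_succ]

lemma Bmat_apply_zero (cI p lam : ℝ) (n : ℕ) (i : Fin (n + 2)) :
    Bmat cI p lam (n + 2) i 0 =
      if i = Fin.last (n + 1) then p else if i = 0 then cI else 0 := by
  simp only [Bmat, Matrix.of_apply, Fin.val_zero, Fin.ext_iff, Fin.val_last]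
  split_ifs <;> first | rfl | omega | contradiction

lemma det_Bmat_succ_succ (cI p lam : ℝ) (n : ℕ) :
    (Bmat cI p lam (n + 2)).det =
      cI * (Bmat cI p lam (n + 1)).det + p * (cI + lam) ^ (n + 1) := by
  rw [Matrix.det_succ_column_zero, Fintype.sum_eq_add 0 (Fin.last (n + 1)) (by simp [Fin.ext_iff])
    fun i ⟨hi0, hilast⟩ => by rw [Bmat_apply_zero, if_neg hilast, if_neg hi0, mul_zero, zero_mul]]
  rw [Fin.succAbove_zero, Fin.succAbove_last, Bmat_submatrix_succ_succ,
    det_Bmat_submatrix_castSucc_succ, Bmat_apply_zero, Bmat_apply_zero]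
  simp only [Fin.last_pos.ne, Fin.last_pos.ne', if_true, if_false, Fin.val_zero, Fin.val_last]
  have hsign : (-1 : ℝ) ^ (n + 1) * (-cI - lam) ^ (n + 1) = (cI + lam) ^ (n + 1) := by
    rw [← mul_pow]; ring
  linear_combination p * hsign

lemma det_Bmat_succ (cI p lam : ℝ) (n : ℕ) :
    (Bmat cI p lam (n + 1)).det =
      p * ∑ j ∈ Finset.range (n + 1), cI ^ j * (cI + lam) ^ (n - j) := by
  induction n with
  | zero => simp [Bmat]
  | succ n ih =>
    have hshift : ∑ j ∈ Finset.range (n + 1), cI ^ (j + 1) * (cI + lam) ^ (n + 1 - (j + 1)) =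
        cI * ∑ j ∈ Finset.range (n + 1), cI ^ j * (cI + lam) ^ (n - j) := by
      rw [Finset.mul_sum]
      exact Finset.sum_congr rfl fun j _ => by rw [Nat.add_sub_add_right, pow_succ]; ring
    rw [det_Bmat_succ_succ, ih, Finset.sum_range_succ' _ (n + 1), hshift, Nat.sub_zero]
    ring

theorem stmt_1 (cI p lam : ℝ) (k : ℕ) (hk : 2 ≤ k) :
    (Bmat cI p lam k).det
      = p * ∑ j ∈ Finset.range k, cI ^ j * (cI + lam) ^ (k - 1 - j) := by
  obtain ⟨n, rfl⟩ : ∃ n, k = n + 1 := ⟨k - 1, by omega⟩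
  exact det_Bmat_succ cI p lam n
end

section
/- Let A be the (n_I+2)×(n_I+2) matrix of the system with n_E = 0: A has -c_I on the diagonal entries 1 through n_I, c_I on the subdiagonal entries (i+1,i) for 1 ≤ i ≤ n_I - 1, βT in entry (1, n_I+1), p in entries (n_I+1, j) for 1 ≤ j ≤ n_I, -c in entry (n_I+1, n_I+1), v_a in entry (n_I+1, n_I+2), all other entries zero (in particular the last row is zero). Then (-1)^{n_I} det(A - λI) = (c_I + λ)^{n_I}(c + λ)λ + βTp(c_I^{n_I} - (c_I + λ)^{n_I}). -/
open Finset

/-- helper matrix N -/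
def Nmat (cI p lam : ℝ) (n : ℕ) : Matrix (Fin (n+1)) (Fin (n+1)) ℝ :=
  Matrix.of fun i j =>
    if i.val = n then p
    else if j.val = i.val then cI
    else if j.val = i.val + 1 then -(cI+lam)
    else 0

lemma sum_two {n : ℕ} (f : Fin (n+2) → ℝ)
    (h : ∀ j : Fin (n+2), j.val ≠ 0 → j.val ≠ n+1 → f j = 0) :
    ∑ j, f j = f 0 + f (Fin.last (n+1)) := by
  rw [Fin.sum_univ_succ]
  congr 1
  rw [← Fin.succ_last]
  apply Finset.sum_eq_single (Fin.last n)
  · intro b _ hb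
    apply h
    · simp [Fin.val_succ]
    · simp only [Fin.val_succ]
      intro hc
      apply hb
      apply Fin.ext
      simp only [Fin.val_last]
      omega
  · intro hmem; exact absurd (Finset.mem_univ _) hmem

lemma detN (cI p lam : ℝ) : ∀ n, (Nmat cI p lam n).det
    = p * ∑ i ∈ range (n+1), (cI+lam)^i * cI^(n-i)
  | 0 => by simp [Nmat, Matrix.det_fin_one]
  | (n+1) => by
    rw [Matrix.det_succ_column_zero]
    rw [sum_two]
    · have h0 : (Nmat cI p lam (n+1)).submatrix (Fin.succAbove 0) Fin.succ
          = Nmat cI p lam n := by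
        ext i j
        have hi := i.isLt; have hj := j.isLt
        simp only [Fin.succAbove_zero, Matrix.submatrix_apply, Nmat, Matrix.of_apply,
          Fin.val_succ]
        split_ifs <;> first | rfl | omega | simp_all
      have hL : ∀ i j : Fin (n+1), i < j →
          (Nmat cI p lam (n+1)).submatrix (Fin.succAbove (Fin.last (n+1))) Fin.succ i j = 0 := by
        intro i j hij
        have hi := i.isLt; have hj := j.isLt
        have hv : i.val < j.val := hij
        simp only [Fin.succAbove_last, Matrix.submatrix_apply, Nmat, Matrix.of_apply,
          Fin.val_succ, Fin.coe_castSucc]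
        split_ifs <;> first | rfl | omega | simp_all
      have hdetL : ((Nmat cI p lam (n+1)).submatrix
            (Fin.succAbove (Fin.last (n+1))) Fin.succ).det = (-(cI+lam))^(n+1) := by
        rw [Matrix.det_of_lowerTriangular _ (fun i j hij => hL i j hij)]
        have : ∀ i : Fin (n+1), (Nmat cI p lam (n+1)).submatrix
            (Fin.succAbove (Fin.last (n+1))) Fin.succ i i = -(cI+lam) := by
          intro i
          have hi := i.isLt
          simp only [Fin.succAbove_last, Matrix.submatrix_apply, Nmat, Matrix.of_apply,
            Fin.val_succ, Fin.coe_castSucc]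
          split_ifs <;> first | rfl | omega | simp_all
        rw [Finset.prod_congr rfl (fun i _ => this i), Finset.prod_const]
        simp
      have e0 : (Nmat cI p lam (n+1)) 0 0 = cI := by
        simp [Nmat]
      have eL : (Nmat cI p lam (n+1)) (Fin.last (n+1)) 0 = p := by
        simp [Nmat]
      rw [h0, hdetL, e0, eL, detN cI p lam n]
      have hS : ∑ i ∈ range (n+2), (cI+lam)^i * cI^(n+1-i)
          = cI * (∑ i ∈ range (n+1), (cI+lam)^i * cI^(n-i)) + (cI+lam)^(n+1) := by
        rw [Finset.sum_range_succ, Finset.mul_sum]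
        congr 1
        · apply Finset.sum_congr rfl
          intro i hi
          have : i ≤ n := Nat.lt_succ_iff.mp (Finset.mem_range.mp hi)
          rw [show n+1-i = (n-i)+1 by omega, pow_succ]
          ring
        · simp
      rw [hS]
      have hsgn : ((-1:ℝ))^((Fin.last (n+1)).val) * (-(cI+lam))^(n+1) = (cI+lam)^(n+1) := by
        rw [Fin.val_last, ← mul_pow]
        ring_nf
      simp only [Fin.val_zero, pow_zero, one_mul]
      calc cI * (p * ∑ i ∈ range (n+1), (cI+lam)^i * cI^(n-i))
            + (-1)^((Fin.last (n+1)).val) * p * (-(cI+lam))^(n+1)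
          = cI * (p * ∑ i ∈ range (n+1), (cI+lam)^i * cI^(n-i))
            + p * ((-1:ℝ)^((Fin.last (n+1)).val) * (-(cI+lam))^(n+1)) := by ring
        _ = _ := by rw [hsgn]; ring
    · intro j hj0 hjL
      have : (Nmat cI p lam (n+1)) j 0 = 0 := by
        have hj := j.isLt
        simp only [Nmat, Matrix.of_apply, Fin.val_zero]
        split_ifs <;> first | rfl | omega | simp_all
      rw [this]; ring

/-- helper matrix M -/
def Mmat (cI c b p lam : ℝ) (n : ℕ) : Matrix (Fin (n+1)) (Fin (n+1)) ℝ :=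
  Matrix.of fun i j =>
    if i.val = n then (if j.val < n then p else -(c+lam))
    else if j.val = i.val then -(cI+lam)
    else if i.val = j.val + 1 then cI
    else if i.val = 0 ∧ j.val = n then b
    else 0

lemma detM0 (cI c p lam : ℝ) : ∀ n, (Mmat cI c 0 p lam n).det
    = (-(cI+lam))^n * (-(c+lam))
  | 0 => by simp [Mmat, Matrix.det_fin_one]
  | (n+1) => by
    rw [Matrix.det_succ_row_zero]
    rw [Finset.sum_eq_single (0 : Fin (n+2))]
    · have h0 : (Mmat cI c 0 p lam (n+1)).submatrix Fin.succ ((0:Fin (n+2)).succAbove)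
          = Mmat cI c 0 p lam n := by
        ext i j
        have hi := i.isLt; have hj := j.isLt
        simp only [Fin.succAbove_zero, Matrix.submatrix_apply, Mmat, Matrix.of_apply,
          Fin.val_succ]
        split_ifs <;> first | rfl | omega | simp_all
      have e0 : (Mmat cI c 0 p lam (n+1)) 0 0 = -(cI+lam) := by
        simp [Mmat]
      rw [h0, e0, detM0 cI c p lam n]
      simp [pow_succ]
      ring
    · intro j _ hj0
      have : (Mmat cI c 0 p lam (n+1)) 0 j = 0 := by
        have hj := j.isLt
        have hj0' : j.val ≠ 0 := fun h => hj0 (Fin.ext h)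
        simp only [Mmat, Matrix.of_apply, Fin.val_zero]
        split_ifs <;> first | rfl | omega | simp_all
      rw [this]; ring
    · intro h; exact absurd (Finset.mem_univ _) h

lemma detM (cI c b p lam : ℝ) (m : ℕ) : (Mmat cI c b p lam (m+1)).det
    = (-(cI+lam))^(m+1) * (-(c+lam))
      + (-1)^(m+1) * (b * (p * ∑ i ∈ Finset.range (m+1), (cI+lam)^i * cI^(m-i))) := by
  rw [Matrix.det_succ_row_zero]
  rw [sum_two]
  · have h0 : (Mmat cI c b p lam (m+1)).submatrix Fin.succ ((0:Fin (m+2)).succAbove)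
        = Mmat cI c 0 p lam m := by
      ext i j
      have hi := i.isLt; have hj := j.isLt
      simp only [Fin.succAbove_zero, Matrix.submatrix_apply, Mmat, Matrix.of_apply,
        Fin.val_succ]
      split_ifs <;> first | rfl | omega | simp_all
    have hL : (Mmat cI c b p lam (m+1)).submatrix Fin.succ ((Fin.last (m+1)).succAbove)
        = Nmat cI p lam m := by
      ext i j
      have hi := i.isLt; have hj := j.isLt
      simp only [Fin.succAbove_last, Matrix.submatrix_apply, Mmat, Nmat, Matrix.of_apply,
        Fin.val_succ, Fin.coe_castSucc]
      split_ifs <;> first | rfl | omega | simp_all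
    have e0 : (Mmat cI c b p lam (m+1)) 0 0 = -(cI+lam) := by simp [Mmat]
    have eL : (Mmat cI c b p lam (m+1)) 0 (Fin.last (m+1)) = b := by
      simp [Mmat]
    rw [h0, hL, e0, eL, detM0 cI c p lam m, detN cI p lam m]
    simp only [Fin.val_zero, pow_zero, one_mul, Fin.val_last, pow_succ]
    ring
  · intro j hj0 hjL
    have : (Mmat cI c b p lam (m+1)) 0 j = 0 := by
      have hj := j.isLt
      simp only [Mmat, Matrix.of_apply, Fin.val_zero]
      split_ifs <;> first | rfl | omega | simp_all
    rw [this]; ring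

/-- The system matrix `A` for `n_E = 0`: `-c_I` on the first `n_I` diagonal
entries, `c_I` on the subdiagonal below them, `βT` in entry `(1, n_I+1)`,
`p` in entries `(n_I+1, j)` for `j ≤ n_I`, `-c` at `(n_I+1, n_I+1)`,
`v_a` at `(n_I+1, n_I+2)`, last row zero. (Indices are 0-based in Lean.) -/
def Amat (cI c β T p va : ℝ) (nI : ℕ) : Matrix (Fin (nI + 2)) (Fin (nI + 2)) ℝ :=
  Matrix.of fun i j =>
    if i.val = nI + 1 then 0
    else if i.val = nI then
      (if j.val < nI then p else if j.val = nI then -c else va)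
    else
      if j.val = i.val then -cI
      else if i.val = j.val + 1 then cI
      else if i.val = 0 ∧ j.val = nI then β * T
      else 0

theorem stmt_4 (cI c β T p va : ℝ) (nI : ℕ) (hnI : 1 ≤ nI) (lam : ℝ) :
    (-1 : ℝ) ^ nI * (Amat cI c β T p va nI - lam • (1 : Matrix (Fin (nI + 2)) (Fin (nI + 2)) ℝ)).det
      = (cI + lam) ^ nI * (c + lam) * lam + β * T * p * (cI ^ nI - (cI + lam) ^ nI) := by
  obtain ⟨m, rfl⟩ : ∃ m, nI = m + 1 := ⟨nI - 1, by omega⟩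
  set A := Amat cI c β T p va (m+1) - lam • (1 : Matrix (Fin (m+3)) (Fin (m+3)) ℝ) with hA
  rw [Matrix.det_succ_row A (Fin.last (m+2))]
  rw [Finset.sum_eq_single (Fin.last (m+2))]
  · have eL : A (Fin.last (m+2)) (Fin.last (m+2)) = -lam := by
      simp [hA, Amat, Matrix.sub_apply, Matrix.smul_apply, Matrix.one_apply]
    have hsub : A.submatrix ((Fin.last (m+2)).succAbove) ((Fin.last (m+2)).succAbove)
        = Mmat cI c (β*T) p lam (m+1) := by
      ext i j
      have hi := i.isLt; have hj := j.isLt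
      simp only [hA, Fin.succAbove_last, Matrix.submatrix_apply, Matrix.sub_apply,
        Matrix.smul_apply, Matrix.one_apply, Amat, Mmat, Matrix.of_apply,
        Fin.coe_castSucc, Fin.castSucc_inj, Fin.ext_iff, smul_eq_mul]
      split_ifs <;> first | ring1 | (exfalso; omega) | simp_all
    rw [eL, hsub, detM cI c (β*T) p lam m]
    have hgeo : (∑ i ∈ Finset.range (m+1), (cI+lam)^i * cI^(m-i)) * lam
        = (cI+lam)^(m+1) - cI^(m+1) := by
      have h := geom_sum₂_mul (cI+lam) cI (m+1)
      simp only [Nat.add_sub_cancel, add_sub_cancel_left] at h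
      exact h
    have h1 : ((-1:ℝ))^(m+1) * (-1:ℝ)^(m+1) = 1 := by
      rw [← mul_pow]; norm_num
    have hnegpow : (-(cI+lam))^(m+1) = (-1:ℝ)^(m+1) * (cI+lam)^(m+1) := by
      rw [← neg_one_mul, mul_pow]
    have hs4 : ((-1:ℝ))^(((Fin.last (m+2)).val) + ((Fin.last (m+2)).val)) = 1 := by
      rw [← two_mul, pow_mul]; norm_num
    rw [hs4, hnegpow]
    linear_combination (lam*(cI+lam)^(m+1)*(c+lam)
        - lam*(β*T*(p*(∑ i ∈ Finset.range (m+1), (cI+lam)^i * cI^(m-i)))))*h1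
      - (β*T*p)*hgeo
  · intro j _ hj
    have : A (Fin.last (m+2)) j = 0 := by
      simp only [hA, Matrix.sub_apply, Matrix.smul_apply, smul_eq_mul, Amat,
        Matrix.of_apply, Fin.val_last]
      rw [Matrix.one_apply_ne (fun h => hj h.symm)]
      simp
    rw [this]; ring
  · intro h; exact absurd (Finset.mem_univ _) h
end

section
/- Suppose c_I, c, β, T, p > 0 and c·c_I < βTp·n_I (indefinite case). Then the polynomial P(λ) = (c_I + λ)^{n_I}(c + λ)λ + βTp(c_I^{n_I} - (c_I + λ)^{n_I}) has a positive real root. -/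
theorem stmt_13 (cI c β T p : ℝ) (hcI : 0 < cI) (hc : 0 < c) (hβ : 0 < β)
    (hT : 0 < T) (hp : 0 < p) (nI : ℕ) (hnI : 1 ≤ nI)
    (h : c * cI < β * T * p * nI) :
    ∃ lam : ℝ, 0 < lam ∧
      (cI + lam) ^ nI * (c + lam) * lam
        + β * T * p * (cI ^ nI - (cI + lam) ^ nI) = 0 := by
  set g : ℝ → ℝ := fun x =>
    (cI + x) ^ nI * (c + x) -
      β * T * p * ∑ i ∈ Finset.range nI, (cI + x) ^ i * cI ^ (nI - 1 - i) with hg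
  have hcont : ContinuousOn g (Set.Icc 0 (max 1 (β * T * p * nI))) := by
    apply Continuous.continuousOn
    fun_prop
  have hg0 : g 0 < 0 := by
    have hsum : ∑ i ∈ Finset.range nI, (cI + 0) ^ i * cI ^ (nI - 1 - i)
        = nI * cI ^ (nI - 1) := by
      rw [Finset.sum_congr rfl (fun i hi => ?_), Finset.sum_const, Finset.card_range,
        nsmul_eq_mul]
      rw [add_zero, ← pow_add]
      congr 1
      have : i ≤ nI - 1 := Nat.le_sub_one_of_lt (Finset.mem_range.mp hi)
      omega
    have hpow : (0:ℝ) < cI ^ (nI - 1) := pow_pos hcI _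
    have hpn : cI ^ nI = cI ^ (nI - 1) * cI := by
      rw [← pow_succ]; congr 1; omega
    have : g 0 = cI ^ (nI - 1) * (cI * c - β * T * p * nI) := by
      simp only [hg]
      rw [hsum]; simp only [add_zero]; rw [hpn]; ring
    rw [this]
    apply mul_neg_of_pos_of_neg hpow
    nlinarith
  set b : ℝ := max 1 (β * T * p * nI) with hb
  have hb1 : (1:ℝ) ≤ b := le_max_left _ _
  have hb2 : β * T * p * nI ≤ b := le_max_right _ _
  have hbpos : (0:ℝ) < b := lt_of_lt_of_le one_pos hb1
  have hgb : 0 ≤ g b := by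
    have hsumle : ∑ i ∈ Finset.range nI, (cI + b) ^ i * cI ^ (nI - 1 - i)
        ≤ nI * (cI + b) ^ (nI - 1) := by
      calc ∑ i ∈ Finset.range nI, (cI + b) ^ i * cI ^ (nI - 1 - i)
          ≤ ∑ i ∈ Finset.range nI, (cI + b) ^ (nI - 1) := by
            apply Finset.sum_le_sum
            intro i hi
            have hi' : i ≤ nI - 1 := Nat.le_sub_one_of_lt (Finset.mem_range.mp hi)
            calc (cI + b) ^ i * cI ^ (nI - 1 - i)
                ≤ (cI + b) ^ i * (cI + b) ^ (nI - 1 - i) := by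
                  apply mul_le_mul_of_nonneg_left _ (by positivity)
                  exact pow_le_pow_left₀ hcI.le (by linarith) _
              _ = (cI + b) ^ (nI - 1) := by rw [← pow_add]; congr 1; omega
        _ = nI * (cI + b) ^ (nI - 1) := by
            rw [Finset.sum_const, Finset.card_range, nsmul_eq_mul]
    have hpow : (0:ℝ) < (cI + b) ^ (nI - 1) := by positivity
    have key : (cI + b) ^ nI * (c + b) ≥ (cI + b) ^ (nI - 1) * (β * T * p * nI) := by
      have hpn : (cI + b) ^ nI = (cI + b) ^ (nI - 1) * (cI + b) := by
        rw [← pow_succ]; congr 1; omega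
      rw [hpn]
      have h1 : β * T * p * nI ≤ (cI + b) * (c + b) := by nlinarith
      nlinarith
    have : β * T * p * ∑ i ∈ Finset.range nI, (cI + b) ^ i * cI ^ (nI - 1 - i)
        ≤ (cI + b) ^ (nI - 1) * (β * T * p * nI) := by
      have := mul_le_mul_of_nonneg_left hsumle (by positivity : (0:ℝ) ≤ β * T * p)
      nlinarith
    simp only [hg]
    linarith
  have hmem : (0:ℝ) ∈ Set.Icc (g 0) (g b) := ⟨hg0.le, hgb⟩
  obtain ⟨lam, hlam, hglam⟩ := intermediate_value_Icc hbpos.le hcont hmem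
  refine ⟨lam, ?_, ?_⟩
  · rcases lt_or_eq_of_le hlam.1 with h' | h'
    · exact h'
    · exfalso; rw [← h'] at hglam; rw [hglam] at hg0; exact lt_irrefl _ hg0
  · have hgeom := geom_sum₂_mul (cI + lam) cI nI
    have hsub : cI + lam - cI = lam := by ring
    rw [hsub] at hgeom
    have : (cI + lam) ^ nI * (c + lam) * lam
        + β * T * p * (cI ^ nI - (cI + lam) ^ nI) = lam * g lam := by
      simp only [hg]
      linear_combination (β * T * p) * hgeom
    rw [this, hglam, mul_zero]
end

section
/- Suppose c_I, c, β, T, p > 0 and c·c_I > βTp·n_I (definite case). Then every nonzero real root of P(λ) = (c_I + λ)^{n_I}(c + λ)λ + βTp(c_I^{n_I} - (c_I + λ)^{n_I}) is negative. -/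
lemma pow_sub_pow_le_aux (a b : ℝ) (hb : 0 ≤ b) (hab : b ≤ a) :
    ∀ n : ℕ, a ^ n - b ^ n ≤ n * (a - b) * a ^ (n - 1) := by
  intro n
  induction n with
  | zero => simp
  | succ m ih =>
    have ha : 0 ≤ a := le_trans hb hab
    have hbm : b ^ m ≤ a ^ m := pow_le_pow_left₀ hb hab m
    cases m with
    | zero => simp
    | succ k =>
      have key : a ^ (k + 2) - b ^ (k + 2)
          = a * (a ^ (k + 1) - b ^ (k + 1)) + b ^ (k + 1) * (a - b) := by ring
      rw [key]
      have h1 : a * (a ^ (k + 1) - b ^ (k + 1)) ≤ a * ((k + 1) * (a - b) * a ^ k) := by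
        apply mul_le_mul_of_nonneg_left _ ha
        simpa using ih
      have h2 : b ^ (k + 1) * (a - b) ≤ a ^ (k + 1) * (a - b) := by
        apply mul_le_mul_of_nonneg_right (pow_le_pow_left₀ hb hab _) (by linarith)
      have : a * ((k + 1 : ℝ) * (a - b) * a ^ k) = (k + 1) * (a - b) * a ^ (k + 1) := by
        ring
      push_cast
      nlinarith [h1, h2]

theorem stmt_14 (cI c β T p : ℝ) (hcI : 0 < cI) (hc : 0 < c) (hβ : 0 < β)
    (hT : 0 < T) (hp : 0 < p) (nI : ℕ) (hnI : 1 ≤ nI)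
    (h : c * cI > β * T * p * nI) :
    ∀ lam : ℝ, lam ≠ 0 →
      (cI + lam) ^ nI * (c + lam) * lam
        + β * T * p * (cI ^ nI - (cI + lam) ^ nI) = 0 → lam < 0 := by
  intro lam hne heq
  by_contra hlt
  have hl : 0 < lam := lt_of_le_of_ne (not_lt.mp hlt) (Ne.symm hne)
  have hbound := pow_sub_pow_le_aux (cI + lam) cI (le_of_lt hcI) (by linarith) nI
  have hsub : (cI + lam) - cI = lam := by ring
  rw [hsub] at hbound
  have hpow : (cI + lam) ^ nI = (cI + lam) * (cI + lam) ^ (nI - 1) := by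
    obtain ⟨m, rfl⟩ : ∃ m, nI = m + 1 :=
      ⟨nI - 1, (Nat.succ_pred_eq_of_pos (lt_of_lt_of_le one_pos hnI)).symm⟩
    simp [pow_succ]
    ring
  have hppos : 0 < (cI + lam) ^ (nI - 1) := pow_pos (by linarith) _
  have hn1 : (1 : ℝ) ≤ (nI : ℝ) := by exact_mod_cast hnI
  -- β T p * ((cI+lam)^nI - cI^nI) ≤ β T p * nI * lam * (cI+lam)^(nI-1)
  have hβTp : 0 < β * T * p := by positivity
  have h3 : β * T * p * ((cI + lam) ^ nI - cI ^ nI)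
      ≤ β * T * p * (nI * lam * (cI + lam) ^ (nI - 1)) :=
    mul_le_mul_of_nonneg_left hbound (le_of_lt hβTp)
  -- (cI+lam)*(c+lam) > β T p * nI
  have h4 : β * T * p * (nI : ℝ) < (cI + lam) * (c + lam) := by nlinarith
  rw [hpow] at heq h3
  nlinarith [heq, h3, mul_lt_mul_of_pos_right h4 (mul_pos hl hppos)]
end

section
/- Let A be the system matrix with n_E = 0, with c_I, c, β, p, T > 0 and v_a ≠ 0. Then the kernel of A is one-dimensional, spanned by the vector (βT/c_I, βT/c_I, ..., βT/c_I, 1, (c - βTp·n_I/c_I)/v_a). -/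
/-- The claimed kernel vector `(βT/c_I, …, βT/c_I, 1, (c - βTp·n_I/c_I)/v_a)`. -/
noncomputable def kerVec (cI c β T p va : ℝ) (nI : ℕ) : Fin (nI + 2) → ℝ :=
  fun i =>
    if i.val < nI then β * T / cI
    else if i.val = nI then 1
    else (c - β * T * p * nI / cI) / va

set_option maxRecDepth 10000

section rows
variable (cI c β T p va : ℝ) (nI : ℕ)

lemma Amat_row0 (hnI : 1 ≤ nI) (v : Fin (nI+2) → ℝ) :
    (Amat cI c β T p va nI).mulVec v ⟨0, by omega⟩ =
      -cI * v ⟨0, by omega⟩ + β * T * v ⟨nI, by omega⟩ := by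
  rw [Matrix.mulVec, dotProduct]
  rw [← Finset.sum_subset (Finset.subset_univ {(⟨0, by omega⟩ : Fin (nI+2)), ⟨nI, by omega⟩})
      (fun x _ hx => ?_)]
  · rw [Finset.sum_pair (by simp only [ne_eq, Fin.mk.injEq]; omega)]
    simp only [Amat, Matrix.of_apply]
    split_ifs <;> (first | ring1 | omega | (exfalso; omega) | (exfalso; simp_all) | (simp_all; omega) | (simp_all; ring1))
  · simp only [Finset.mem_insert, Finset.mem_singleton, not_or, Fin.ext_iff] at hx
    simp only [Amat, Matrix.of_apply]
    split_ifs <;> (first | ring1 | omega | (exfalso; omega) | (exfalso; simp_all) | (simp_all; omega) | (simp_all; ring1))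

lemma Amat_rowmid (k : ℕ) (h1 : 1 ≤ k) (h2 : k < nI) (v : Fin (nI+2) → ℝ) :
    (Amat cI c β T p va nI).mulVec v ⟨k, by omega⟩ =
      cI * v ⟨k-1, by omega⟩ - cI * v ⟨k, by omega⟩ := by
  rw [Matrix.mulVec, dotProduct]
  rw [← Finset.sum_subset (Finset.subset_univ {(⟨k-1, by omega⟩ : Fin (nI+2)), ⟨k, by omega⟩})
      (fun x _ hx => ?_)]
  · rw [Finset.sum_pair (by simp only [ne_eq, Fin.mk.injEq]; omega)]
    simp only [Amat, Matrix.of_apply]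
    split_ifs <;> (first | ring1 | omega | (exfalso; omega) | (exfalso; simp_all) | (simp_all; omega) | (simp_all; ring1))
  · simp only [Finset.mem_insert, Finset.mem_singleton, not_or, Fin.ext_iff] at hx
    simp only [Amat, Matrix.of_apply]
    split_ifs <;> (first | ring1 | omega | (exfalso; omega) | (exfalso; simp_all) | (simp_all; omega) | (simp_all; ring1))

lemma Amat_rowN (v : Fin (nI+2) → ℝ) :
    (Amat cI c β T p va nI).mulVec v ⟨nI, by omega⟩ =
      p * (∑ j : Fin nI, v (j.castLE (by omega))) - c * v ⟨nI, by omega⟩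
        + va * v ⟨nI+1, by omega⟩ := by
  rw [Matrix.mulVec, dotProduct]
  rw [Fin.sum_univ_castSucc, Fin.sum_univ_castSucc]
  have h1 : ∀ j : Fin nI, (Amat cI c β T p va nI) ⟨nI, by omega⟩ (j.castSucc.castSucc) *
      v (j.castSucc.castSucc) = p * v (j.castLE (by omega)) := by
    intro j
    have he : (j.castSucc.castSucc : Fin (nI+2)) = j.castLE (by omega) := rfl
    rw [he]
    have hj := j.isLt
    simp only [Amat, Matrix.of_apply, Fin.coe_castLE]
    split_ifs <;> (first | ring1 | omega | (exfalso; omega) | (exfalso; simp_all) | (simp_all; omega) | (simp_all; ring1))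
  rw [Finset.sum_congr rfl (fun j _ => h1 j), ← Finset.mul_sum]
  have h2 : ((Fin.last nI).castSucc : Fin (nI+2)) = ⟨nI, by omega⟩ := rfl
  have h3 : (Fin.last (nI+1) : Fin (nI+2)) = ⟨nI+1, by omega⟩ := rfl
  rw [h2, h3]
  simp only [Amat, Matrix.of_apply]
  split_ifs <;> (first | ring1 | omega | (exfalso; omega) | (exfalso; simp_all) | (simp_all; omega) | (simp_all; ring1))

lemma Amat_rowlast (v : Fin (nI+2) → ℝ) :
    (Amat cI c β T p va nI).mulVec v ⟨nI+1, by omega⟩ = 0 := by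
  rw [Matrix.mulVec, dotProduct]
  apply Finset.sum_eq_zero
  intro x _
  simp only [Amat, Matrix.of_apply]
  split_ifs <;> (first | ring1 | omega | (exfalso; omega))

end rows

theorem stmt_16 (cI c β T p va : ℝ) (hcI : 0 < cI) (hc : 0 < c) (hβ : 0 < β)
    (hp : 0 < p) (hT : 0 < T) (hva : va ≠ 0) (nI : ℕ) (hnI : 1 ≤ nI) :
    ∀ v : Fin (nI + 2) → ℝ,
      (Amat cI c β T p va nI).mulVec v = 0 ↔
        ∃ t : ℝ, v = t • kerVec cI c β T p va nI := by
  intro v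
  have hcI' : cI ≠ 0 := ne_of_gt hcI
  have hker : ∀ (k : ℕ) (hk : k < nI + 2), kerVec cI c β T p va nI ⟨k, hk⟩ =
      (if k < nI then β * T / cI else if k = nI then 1 else (c - β * T * p * nI / cI) / va) :=
    fun k hk => rfl
  constructor
  · intro h
    set t := v ⟨nI, by omega⟩ with ht
    have key : ∀ (k : ℕ) (hk : k < nI), v ⟨k, by omega⟩ = t * (β * T / cI) := by
      intro k
      induction k with
      | zero =>
        intro hk
        have h0 := (Amat_row0 cI c β T p va nI hnI v).symm.trans (congrFun h ⟨0, by omega⟩)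
        rw [Pi.zero_apply] at h0
        field_simp at h0 ⊢
        linarith [h0]
      | succ n ih =>
        intro hk
        have hm := (Amat_rowmid cI c β T p va nI (n+1) (by omega) hk v).symm.trans
          (congrFun h ⟨n+1, by omega⟩)
        rw [Pi.zero_apply] at hm
        have hidx : (⟨n+1-1, by omega⟩ : Fin (nI+2)) = ⟨n, by omega⟩ := rfl
        rw [hidx] at hm
        have hihn := ih (by omega)
        have hv : v ⟨n+1, by omega⟩ = v ⟨n, by omega⟩ := by
          have := mul_left_cancel₀ hcI' (show cI * v ⟨n, by omega⟩ = cI * v ⟨n+1, by omega⟩ by linarith)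
          exact this.symm
        rw [hv, hihn]
    refine ⟨t, funext fun i => ?_⟩
    have hieta : i = ⟨i.val, i.isLt⟩ := rfl
    rcases lt_trichotomy i.val nI with hi | hi | hi
    · rw [hieta]
      have hk := key i.val hi
      rw [Pi.smul_apply, hker i.val i.isLt, smul_eq_mul, if_pos hi]
      exact hk
    · rw [hieta]
      rw [Pi.smul_apply, hker i.val i.isLt, smul_eq_mul, if_neg (by omega), if_pos hi, mul_one]
      have heq : (⟨i.val, i.isLt⟩ : Fin (nI+2)) = ⟨nI, by omega⟩ := by
        simp [Fin.ext_iff, hi]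
      rw [heq]
    · have hi' : i.val = nI + 1 := by omega
      have hN := (Amat_rowN cI c β T p va nI v).symm.trans (congrFun h ⟨nI, by omega⟩)
      rw [Pi.zero_apply] at hN
      have hsum : (∑ j : Fin nI, v (j.castLE (by omega))) = nI * (t * (β * T / cI)) := by
        rw [Finset.sum_congr rfl (fun j _ => ?_)]
        · rw [Finset.sum_const, Finset.card_univ, Fintype.card_fin, nsmul_eq_mul]
        · have hj := j.isLt
          have heq : (Fin.castLE (by omega : nI ≤ nI + 2) j) = (⟨j.val, by omega⟩ : Fin (nI+2)) := rfl
          rw [heq]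
          exact key j.val hj
      rw [hsum] at hN
      rw [hieta]
      have hlast : (⟨i.val, i.isLt⟩ : Fin (nI+2)) = ⟨nI+1, by omega⟩ := by
        simp [Fin.ext_iff, hi']
      rw [hlast]
      rw [Pi.smul_apply, hker (nI+1) (by omega), smul_eq_mul, if_neg (by omega), if_neg (by omega)]
      field_simp at hN ⊢
      linarith [hN]
  · rintro ⟨t, rfl⟩
    funext i
    rw [Pi.zero_apply]
    have hval : ∀ (k : ℕ) (hk : k < nI),
        (t • kerVec cI c β T p va nI) (⟨k, by omega⟩ : Fin (nI+2)) = t * (β * T / cI) := by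
      intro k hk
      rw [Pi.smul_apply, hker k (by omega), smul_eq_mul, if_pos hk]
    have hvN : (t • kerVec cI c β T p va nI) ⟨nI, by omega⟩ = t := by
      rw [Pi.smul_apply, hker nI (by omega), smul_eq_mul, if_neg (by omega), if_pos rfl, mul_one]
    have hvL : (t • kerVec cI c β T p va nI) ⟨nI+1, by omega⟩ = t * ((c - β * T * p * nI / cI) / va) := by
      rw [Pi.smul_apply, hker (nI+1) (by omega), smul_eq_mul, if_neg (by omega), if_neg (by omega)]
    rcases lt_trichotomy i.val nI with hi | hi | hi
    · rcases Nat.eq_zero_or_pos i.val with h0 | h0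
      · have heq : i = ⟨0, by omega⟩ := by simp [Fin.ext_iff, h0]
        rw [heq, Amat_row0 cI c β T p va nI hnI]
        rw [hval 0 (by omega), hvN]
        field_simp
        ring
      · have heq : i = ⟨i.val, i.isLt⟩ := rfl
        rw [heq, Amat_rowmid cI c β T p va nI i.val h0 hi]
        rw [hval (i.val - 1) (by omega), hval i.val hi]
        ring
    · have heq : i = ⟨nI, by omega⟩ := by simp [Fin.ext_iff, hi]
      rw [heq, Amat_rowN cI c β T p va nI]
      have hsum : (∑ j : Fin nI, (t • kerVec cI c β T p va nI) (j.castLE (by omega))) =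
          nI * (t * (β * T / cI)) := by
        rw [Finset.sum_congr rfl (fun j _ => ?_)]
        · rw [Finset.sum_const, Finset.card_univ, Fintype.card_fin, nsmul_eq_mul]
        · have hcast : (Fin.castLE (by omega : nI ≤ nI + 2) j) = (⟨j.val, by omega⟩ : Fin (nI+2)) := rfl
          rw [hcast]
          exact hval j.val j.isLt
      rw [hsum, hvN, hvL]
      field_simp
      ring
    · have heq : i = ⟨nI+1, by omega⟩ := by simp [Fin.ext_iff]; omega
      rw [heq, Amat_rowlast]
end

section
/- Let P(λ) = (c_I + λ)^{n_I}(c + λ)λ + βTp(c_I^{n_I} - (c_I + λ)^{n_I}) with c_I, c, β, T, p > 0 and n_I ≥ 3 odd. Then P has a real root λ_2 < -c_I. -/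
theorem stmt_19 (cI c β T p : ℝ) (hcI : 0 < cI) (hc : 0 < c) (hβ : 0 < β)
    (hT : 0 < T) (hp : 0 < p) (nI : ℕ) (hnI : 3 ≤ nI) (hodd : Odd nI) :
    ∃ lam : ℝ, lam < -cI ∧
      (cI + lam) ^ nI * (c + lam) * lam
        + β * T * p * (cI ^ nI - (cI + lam) ^ nI) = 0 := by
  set f : ℝ → ℝ := fun lam =>
    (cI + lam) ^ nI * (c + lam) * lam + β * T * p * (cI ^ nI - (cI + lam) ^ nI)
    with hf
  set x : ℝ := max (max c 1) ((β * T * p + β * T * p * cI ^ nI + 1) / cI) with hx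
  have hx1 : (1:ℝ) ≤ x := le_trans (le_max_right c 1) (le_max_left _ _)
  have hxc : c ≤ x := le_trans (le_max_left c 1) (le_max_left _ _)
  have hx0 : 0 < x := lt_of_lt_of_le one_pos hx1
  have hxd : β * T * p + β * T * p * cI ^ nI + 1 ≤ cI * x := by
    have := le_max_right (max c 1) ((β * T * p + β * T * p * cI ^ nI + 1) / cI)
    rw [div_le_iff₀ hcI] at this
    linarith [this]
  have hcIn : 0 < cI ^ nI := pow_pos hcI nI
  have hbtp : 0 < β * T * p := by positivity
  -- value at -cI
  have hnI0 : nI ≠ 0 := by omega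
  have hfb : f (-cI) = β * T * p * cI ^ nI := by
    simp [hf, zero_pow hnI0]
  have hfbpos : 0 < f (-cI) := by rw [hfb]; positivity
  -- value at λ0 := -cI - x
  have hA1 : (1:ℝ) ≤ x ^ nI := one_le_pow₀ hx1
  have hB : β * T * p + β * T * p * cI ^ nI + 1 ≤ (c + (-cI - x)) * (-cI - x) := by
    have h1 : cI * x ≤ (x + cI - c) * (x + cI) := by nlinarith
    nlinarith
  have hfa : f (-cI - x) < 0 := by
    have hpow : (cI + (-cI - x)) ^ nI = -(x ^ nI) := by
      have : cI + (-cI - x) = -x := by ring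
      rw [this, hodd.neg_pow]
    rw [hf]
    simp only
    rw [hpow]
    set A := x ^ nI
    set B := (c + (-cI - x)) * (-cI - x) with hBdef
    have : -A * (c + (-cI - x)) * (-cI - x) + β * T * p * (cI ^ nI - -A)
        = A * (β * T * p - B) + β * T * p * cI ^ nI := by rw [hBdef]; ring
    rw [this]
    nlinarith [mul_le_mul_of_nonneg_left (show β * T * p - B ≤ -(β * T * p * cI ^ nI + 1) by linarith) (le_trans zero_le_one hA1), hA1]
  -- IVT
  have hcont : ContinuousOn f (Set.Icc (-cI - x) (-cI)) := by
    apply Continuous.continuousOn; fun_prop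
  have hle : -cI - x ≤ -cI := by linarith
  have hmem : (0:ℝ) ∈ Set.Icc (f (-cI - x)) (f (-cI)) :=
    ⟨le_of_lt hfa, le_of_lt hfbpos⟩
  obtain ⟨lam, hlam, hflam⟩ := intermediate_value_Icc hle hcont hmem
  refine ⟨lam, ?_, hflam⟩
  rcases lt_or_eq_of_le hlam.2 with h | h
  · exact h
  · exfalso; rw [h] at hflam; rw [hflam] at hfbpos; exact lt_irrefl 0 hfbpos
end
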